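/- Let Λ > 0, Q ≠ 0, M ≤ 0 and s ∈ (0,1]. Then the quartic P(·,s) has exactly one positive root r₊, this root is simple, and P'(r₊,s) > 0. In particular there is no r₀ > 0 with P(r₀,s) = 0 whose first nonvanishing r-derivative at r₀ is negative. -/
import Mathlib


noncomputable section

/-- The quartic polynomial `P(r,s) = sL/3*r^4 - r^2 + 2sM*r - sQ^2` (case `Q != 0`). -/
def P (M Q Λ s r : ℝ) : ℝ := s * Λ / 3 * r ^ 4 - r ^ 2 + 2 * s * M * r - s * Q ^ 2

/-- First derivative of `P` with respect to `r`. -/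
def P' (M Q Λ s r : ℝ) : ℝ := 4 * s * Λ / 3 * r ^ 3 - 2 * r + 2 * s * M

/-- Second derivative of `P` with respect to `r`. -/
def P'' (M Q Λ s r : ℝ) : ℝ := 4 * s * Λ * r ^ 2 - 2

/-- Third derivative of `P` with respect to `r`. -/
def P''' (M Q Λ s r : ℝ) : ℝ := 8 * s * Λ * r

/-- Fourth derivative of `P` with respect to `r`. -/
def P'''' (M Q Λ s r : ℝ) : ℝ := 8 * s * Λ

/-- If `x` is a positive root, then `P` is positive strictly to the right of `x`. -/
lemma P_pos_of_root_lt (M Q Λ s : ℝ)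
    (hΛ : 0 < Λ) (hQ : Q ≠ 0) (hM : M ≤ 0) (hs0 : 0 < s)
    {x y : ℝ} (hx : 0 < x) (hxy : x < y) (hPx : P M Q Λ s x = 0) :
    0 < P M Q Λ s y := by
  have hy : 0 < y := hx.trans hxy
  have key : x ^ 4 * P M Q Λ s y =
      x ^ 2 * y ^ 2 * (y ^ 2 - x ^ 2) - (2 * s * M) * x * y * (y ^ 3 - x ^ 3)
        + (s * Q ^ 2) * (y ^ 4 - x ^ 4) + y ^ 4 * P M Q Λ s x := by
    unfold P; ring
  rw [hPx, mul_zero, add_zero] at key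
  have h2 : 0 < y ^ 2 - x ^ 2 := by nlinarith
  have h3 : 0 < y ^ 3 - x ^ 3 := by nlinarith
  have h4 : 0 < y ^ 4 - x ^ 4 := by nlinarith
  have hq2 : 0 < s * Q ^ 2 := by positivity
  have hc : 2 * s * M ≤ 0 := by nlinarith
  have t1 : 0 < x ^ 2 * y ^ 2 * (y ^ 2 - x ^ 2) := by positivity
  have t2 : 0 ≤ -((2 * s * M) * x * y * (y ^ 3 - x ^ 3)) := by
    have : 0 ≤ (-(2 * s * M)) * (x * y * (y ^ 3 - x ^ 3)) := by
      apply mul_nonneg (by linarith)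
      positivity
    nlinarith [this]
  have t3 : 0 < (s * Q ^ 2) * (y ^ 4 - x ^ 4) := mul_pos hq2 h4
  have hP : 0 < x ^ 4 * P M Q Λ s y := by nlinarith
  have hx4 : 0 < x ^ 4 := by positivity
  nlinarith [hP, hx4]

/-- At any positive root, `P' > 0`. -/
lemma P'_pos_at_root (M Q Λ s : ℝ)
    (hΛ : 0 < Λ) (hQ : Q ≠ 0) (hM : M ≤ 0) (hs0 : 0 < s)
    {r : ℝ} (hr : 0 < r) (hPr : P M Q Λ s r = 0) :
    0 < P' M Q Λ s r := by
  have key : r * P' M Q Λ s r =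
      4 * P M Q Λ s r + 2 * r ^ 2 - 6 * s * M * r + 4 * (s * Q ^ 2) := by
    unfold P P'; ring
  rw [hPr] at key
  have hq2 : 0 < s * Q ^ 2 := by positivity
  have hmr : 0 ≤ -(6 * s * M * r) := by nlinarith [mul_nonneg (mul_nonneg hs0.le (neg_nonneg.2 hM)) hr.le]
  have hpos : 0 < r * P' M Q Λ s r := by nlinarith
  nlinarith [hpos, hr]

/-- For Λ > 0, Q ≠ 0, M ≤ 0: exactly one positive root, simple, with positive derivative;
in particular no positive root has negative first nonvanishing derivative. -/
theorem no_r0_nonpositive_mass (M Q Λ s : ℝ)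
    (hΛ : 0 < Λ) (hQ : Q ≠ 0) (hM : M ≤ 0) (hs0 : 0 < s) (hs1 : s ≤ 1) :
    (∃ rp : ℝ, 0 < rp ∧ P M Q Λ s rp = 0 ∧
      (∀ r : ℝ, 0 < r → P M Q Λ s r = 0 → r = rp) ∧
      P' M Q Λ s rp ≠ 0 ∧ 0 < P' M Q Λ s rp) ∧
    ¬ ∃ r₀ : ℝ, 0 < r₀ ∧ P M Q Λ s r₀ = 0 ∧
      (P' M Q Λ s r₀ < 0 ∨
       (P' M Q Λ s r₀ = 0 ∧ P'' M Q Λ s r₀ < 0) ∨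
       (P' M Q Λ s r₀ = 0 ∧ P'' M Q Λ s r₀ = 0 ∧ P''' M Q Λ s r₀ < 0) ∨
       (P' M Q Λ s r₀ = 0 ∧ P'' M Q Λ s r₀ = 0 ∧ P''' M Q Λ s r₀ = 0 ∧
        P'''' M Q Λ s r₀ < 0)) := by
  have hq2 : 0 < s * Q ^ 2 := by positivity
  have ha : 0 < s * Λ / 3 := by positivity
  -- existence of a positive root via IVT
  set R : ℝ := max 1 ((2 - 2 * s * M + s * Q ^ 2) / (s * Λ / 3)) with hR
  have hR1 : (1 : ℝ) ≤ R := le_max_left _ _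
  have hR2 : (2 - 2 * s * M + s * Q ^ 2) / (s * Λ / 3) ≤ R := le_max_right _ _
  have haR : 2 - 2 * s * M + s * Q ^ 2 ≤ (s * Λ / 3) * R := by
    rw [div_le_iff₀ ha] at hR2; linarith [hR2]
  have hPR : 0 < P M Q Λ s R := by
    unfold P
    have hR0 : (0 : ℝ) < R := lt_of_lt_of_le one_pos hR1
    have h1 : (2 - 2 * s * M + s * Q ^ 2) * R ^ 3 ≤ (s * Λ / 3) * R * R ^ 3 :=
      mul_le_mul_of_nonneg_right haR (by positivity)
    have hc : 2 * s * M ≤ 0 := by nlinarith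
    nlinarith [h1, hR1, hR0, mul_le_mul_of_nonneg_left hR1 (le_of_lt hR0),
      sq_nonneg (R - 1), sq_nonneg R, mul_nonneg (le_of_lt hR0) (le_of_lt hR0),
      mul_le_mul_of_nonneg_right (mul_le_mul_of_nonneg_left hR1 (le_of_lt hR0)) (le_of_lt hR0)]
  have hP0 : P M Q Λ s 0 < 0 := by
    unfold P; simp; nlinarith
  have hcont : ContinuousOn (P M Q Λ s) (Set.Icc 0 R) := by
    unfold P; fun_prop
  have h0R : (0 : ℝ) ≤ R := by linarith
  have hiv := intermediate_value_Ioo h0R hcont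
  have hmem : (0 : ℝ) ∈ Set.Ioo (P M Q Λ s 0) (P M Q Λ s R) := ⟨hP0, hPR⟩
  obtain ⟨rp, hrpmem, hrproot⟩ := hiv hmem
  have hrp : 0 < rp := hrpmem.1
  have huniq : ∀ r : ℝ, 0 < r → P M Q Λ s r = 0 → r = rp := by
    intro r hr hPr
    rcases lt_trichotomy r rp with h | h | h
    · exfalso
      have := P_pos_of_root_lt M Q Λ s hΛ hQ hM hs0 hr h hPr
      rw [hrproot] at this; exact lt_irrefl 0 this
    · exact h
    · exfalso
      have := P_pos_of_root_lt M Q Λ s hΛ hQ hM hs0 hrp h hrproot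
      rw [hPr] at this; exact lt_irrefl 0 this
  have hP' : 0 < P' M Q Λ s rp := P'_pos_at_root M Q Λ s hΛ hQ hM hs0 hrp hrproot
  refine ⟨⟨rp, hrp, hrproot, huniq, ne_of_gt hP', hP'⟩, ?_⟩
  rintro ⟨r₀, hr₀, hroot, hcase⟩
  have hP'₀ : 0 < P' M Q Λ s r₀ := P'_pos_at_root M Q Λ s hΛ hQ hM hs0 hr₀ hroot
  rcases hcase with h | ⟨h, _⟩ | ⟨h, _⟩ | ⟨h, _⟩ <;> linarith
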